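/- Let n ≥ 20 be an integer. Then Σ_{t≥0} Pr_1^t[w(t) = n, MAX(w) = n, and MIN(w) ≥ 1] ≤ e^{26}/n, where the (convergent) sum is over all nonnegative integers t and e is Euler's number. -/
import Mathlib


/-- A 1D walk of length `t` started at `i`: a function on `{0,…,t}` starting at `i`
whose consecutive values differ by exactly `1`. -/
def IsWalk (i : ℤ) (t : ℕ) (w : Fin (t + 1) → ℤ) : Prop :=
  w 0 = i ∧ ∀ j : Fin t, |w j.succ - w j.castSucc| = 1

/-- The number of walks of length `t` started at `i` satisfying `P`. -/
noncomputable def walkCount (i : ℤ) (t : ℕ) (P : (Fin (t + 1) → ℤ) → Prop) : ℕ :=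
  {w : Fin (t + 1) → ℤ | IsWalk i t w ∧ P w}.ncard

/-- `Pr_i^t[P]`: the number of walks of length `t` started at `i` satisfying `P`,
divided by `2 ^ t`. -/
noncomputable def walkProb (i : ℤ) (t : ℕ) (P : (Fin (t + 1) → ℤ) → Prop) : ℝ :=
  (walkCount i t P : ℝ) / 2 ^ t

/-- `w(t) = n`. -/
def endsAt {t : ℕ} (n : ℤ) (w : Fin (t + 1) → ℤ) : Prop := w (Fin.last t) = n

/-- `MAX(w) = n`. -/
def maxEq {t : ℕ} (n : ℤ) (w : Fin (t + 1) → ℤ) : Prop :=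
  (∀ j, w j ≤ n) ∧ ∃ j, w j = n

/-- `MIN(w) ≥ m`. -/
def minGE {t : ℕ} (m : ℤ) (w : Fin (t + 1) → ℤ) : Prop := ∀ j, m ≤ w j

namespace WalkAux

def Conf (n : ℤ) {t : ℕ} (w : Fin (t + 1) → ℤ) : Prop := ∀ j, 1 ≤ w j ∧ w j ≤ n

noncomputable def cnt (n : ℤ) (t : ℕ) (y : ℤ) : ℕ :=
  walkCount 1 t (fun w => endsAt y w ∧ Conf n w)

lemma walk_abs_le {i : ℤ} {t : ℕ} {w : Fin (t + 1) → ℤ} (hw : IsWalk i t w) :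
    ∀ j : Fin (t + 1), |w j - i| ≤ (j : ℤ) := by
  intro j
  induction j using Fin.induction with
  | zero => simp [hw.1]
  | succ j ih =>
      have h1 := hw.2 j
      have h2 : |w j.succ - i| ≤ |w j.succ - w j.castSucc| + |w j.castSucc - i| :=
        abs_sub_le _ _ _
      rw [h1] at h2
      have hv : ((j.succ : Fin (t+1)) : ℤ) = ((j.castSucc : Fin (t+1)) : ℤ) + 1 := by
        simp
      rw [hv]
      linarith

lemma walkSet_finite (i : ℤ) (t : ℕ) (P : (Fin (t + 1) → ℤ) → Prop) :
    {w : Fin (t + 1) → ℤ | IsWalk i t w ∧ P w}.Finite := by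
  apply Set.Finite.subset
    (Set.Finite.pi (fun j : Fin (t + 1) => Set.finite_Icc (i - t) (i + t)))
  intro w hw
  simp only [Set.mem_pi, Set.mem_univ, Set.mem_Icc, forall_true_left]
  intro j
  have h := walk_abs_le hw.1 j
  have hj : (j : ℤ) ≤ (t : ℤ) := by exact_mod_cast Fin.is_le j
  rw [abs_sub_le_iff] at h
  omega

lemma cnt_eq_zero (n : ℤ) (t : ℕ) (y : ℤ) (h : y < 1 ∨ n < y) : cnt n t y = 0 := by
  have : {w : Fin (t + 1) → ℤ | IsWalk 1 t w ∧ (endsAt y w ∧ Conf n w)} = ∅ := by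
    ext w
    simp only [Set.mem_setOf_eq, Set.mem_empty_iff_false, iff_false]
    rintro ⟨-, he, hc⟩
    have := hc (Fin.last t)
    rw [he] at this
    omega
  rw [cnt, walkCount, this, Set.ncard_empty]

lemma cnt_zero_one (n : ℤ) (hn : 1 ≤ n) : cnt n 0 1 = 1 := by
  have : {w : Fin 1 → ℤ | IsWalk 1 0 w ∧ (endsAt 1 w ∧ Conf n w)}
      = {fun _ => (1 : ℤ)} := by
    ext w
    simp only [Set.mem_setOf_eq, Set.mem_singleton_iff]
    constructor
    · rintro ⟨⟨h0, -⟩, -, -⟩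
      funext j
      have : j = 0 := Subsingleton.elim _ _
      rw [this, h0]
    · rintro rfl
      exact ⟨⟨rfl, fun j => j.elim0⟩, rfl, fun j => ⟨le_refl 1, hn⟩⟩
  rw [cnt, walkCount, this, Set.ncard_singleton]

lemma cnt_zero_ne (n : ℤ) (y : ℤ) (hy : y ≠ 1) : cnt n 0 y = 0 := by
  have : {w : Fin 1 → ℤ | IsWalk 1 0 w ∧ (endsAt y w ∧ Conf n w)} = ∅ := by
    ext w
    simp only [Set.mem_setOf_eq, Set.mem_empty_iff_false, iff_false]
    rintro ⟨⟨h0, -⟩, he, -⟩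
    apply hy
    have he' : w 0 = y := he
    omega
  rw [cnt, walkCount, this, Set.ncard_empty]

lemma cnt_succ (n : ℤ) (t : ℕ) (y : ℤ) (h1 : 1 ≤ y) (h2 : y ≤ n) :
    cnt n (t + 1) y = cnt n t (y - 1) + cnt n t (y + 1) := by
  classical
  set A := {w : Fin (t + 2) → ℤ | IsWalk 1 (t + 1) w ∧ (endsAt y w ∧ Conf n w)} with hA
  set B1 := {v : Fin (t + 1) → ℤ | IsWalk 1 t v ∧ (endsAt (y - 1) v ∧ Conf n v)} with hB1
  set B2 := {v : Fin (t + 1) → ℤ | IsWalk 1 t v ∧ (endsAt (y + 1) v ∧ Conf n v)} with hB2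
  have inj : Set.InjOn (fun w : Fin (t + 2) → ℤ => w ∘ Fin.castSucc) A := by
    rintro w hw w' hw' h
    funext j
    induction j using Fin.lastCases with
    | last => rw [hw.2.1, hw'.2.1]
    | cast i => exact congrFun h i
  have key : (fun w : Fin (t + 2) → ℤ => w ∘ Fin.castSucc) '' A = B1 ∪ B2 := by
    ext v
    constructor
    · rintro ⟨w, ⟨⟨hw0, hws⟩, hwe, hwc⟩, rfl⟩
      have hwalk : IsWalk 1 t (w ∘ Fin.castSucc) := by
        constructor
        · show w (Fin.castSucc 0) = 1
          rw [Fin.castSucc_zero, hw0]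
        · intro j
          show |w (Fin.castSucc j.succ) - w (Fin.castSucc j.castSucc)| = 1
          rw [← Fin.succ_castSucc]
          exact hws j.castSucc
      have hconf : Conf n (w ∘ Fin.castSucc) := fun j => hwc _
      have hlast := hws (Fin.last t)
      rw [Fin.succ_last] at hlast
      rw [hwe] at hlast
      rw [abs_eq (by norm_num : (0:ℤ) ≤ 1)] at hlast
      rcases hlast with h | h
      · left
        exact ⟨hwalk, by show w (Fin.castSucc (Fin.last t)) = y - 1; omega, hconf⟩
      · right
        exact ⟨hwalk, by show w (Fin.castSucc (Fin.last t)) = y + 1; omega, hconf⟩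
    · rintro (⟨hwalk, hend, hconf⟩ | ⟨hwalk, hend, hconf⟩)
      · refine ⟨Fin.snoc v y, ⟨⟨?_, ?_⟩, ?_, ?_⟩, ?_⟩
        · show (Fin.snoc v y : Fin (t+2) → ℤ) 0 = 1
          rw [show (0 : Fin (t+2)) = Fin.castSucc 0 from rfl, Fin.snoc_castSucc]
          exact hwalk.1
        · intro j
          induction j using Fin.lastCases with
          | last =>
              rw [Fin.succ_last, Fin.snoc_last, Fin.snoc_castSucc, hend]
              simp
          | cast i =>
              rw [Fin.succ_castSucc, Fin.snoc_castSucc, Fin.snoc_castSucc]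
              exact hwalk.2 i
        · show (Fin.snoc v y : Fin (t+2) → ℤ) (Fin.last (t+1)) = y
          rw [Fin.snoc_last]
        · intro j
          induction j using Fin.lastCases with
          | last => rw [Fin.snoc_last]; exact ⟨h1, h2⟩
          | cast i => rw [Fin.snoc_castSucc]; exact hconf i
        · funext i
          exact Fin.snoc_castSucc _ _ _
      · refine ⟨Fin.snoc v y, ⟨⟨?_, ?_⟩, ?_, ?_⟩, ?_⟩
        · show (Fin.snoc v y : Fin (t+2) → ℤ) 0 = 1
          rw [show (0 : Fin (t+2)) = Fin.castSucc 0 from rfl, Fin.snoc_castSucc]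
          exact hwalk.1
        · intro j
          induction j using Fin.lastCases with
          | last =>
              rw [Fin.succ_last, Fin.snoc_last, Fin.snoc_castSucc, hend]
              simp
          | cast i =>
              rw [Fin.succ_castSucc, Fin.snoc_castSucc, Fin.snoc_castSucc]
              exact hwalk.2 i
        · show (Fin.snoc v y : Fin (t+2) → ℤ) (Fin.last (t+1)) = y
          rw [Fin.snoc_last]
        · intro j
          induction j using Fin.lastCases with
          | last => rw [Fin.snoc_last]; exact ⟨h1, h2⟩
          | cast i => rw [Fin.snoc_castSucc]; exact hconf i
        · funext i
          exact Fin.snoc_castSucc _ _ _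
  have disj : Disjoint B1 B2 := by
    rw [Set.disjoint_left]
    rintro v ⟨-, he1, -⟩ ⟨-, he2, -⟩
    rw [endsAt] at he1 he2
    omega
  have fin1 : B1.Finite := walkSet_finite 1 t _
  have fin2 : B2.Finite := walkSet_finite 1 t _
  have : A.ncard = (B1 ∪ B2).ncard := by
    rw [← key, Set.ncard_image_of_injOn inj]
  rw [cnt, cnt, cnt, walkCount, walkCount, walkCount]
  show A.ncard = B1.ncard + B2.ncard
  rw [this, Set.ncard_union_eq disj fin1 fin2]

noncomputable def p (n : ℤ) (t : ℕ) (y : ℤ) : ℝ := (cnt n t y : ℝ) / 2 ^ t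

lemma p_nonneg (n : ℤ) (t : ℕ) (y : ℤ) : 0 ≤ p n t y := by
  rw [p]; positivity

lemma p_eq_zero (n : ℤ) (t : ℕ) (y : ℤ) (h : y < 1 ∨ n < y) : p n t y = 0 := by
  rw [p, cnt_eq_zero n t y h]; simp

lemma p_succ (n : ℤ) (t : ℕ) (y : ℤ) (h1 : 1 ≤ y) (h2 : y ≤ n) :
    p n (t + 1) y = (p n t (y - 1) + p n t (y + 1)) / 2 := by
  rw [p, p, p, cnt_succ n t y h1 h2]
  push_cast
  ring

noncomputable def hfun (n : ℤ) (y : ℤ) : ℝ :=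
  if 1 ≤ y ∧ y ≤ n then 2 * ((n : ℝ) + 1 - (y : ℝ)) / ((n : ℝ) + 1) else 0

lemma hfun_nonneg (n y : ℤ) (hn : 0 ≤ n) : 0 ≤ hfun n y := by
  rw [hfun]
  split
  · next h =>
      have hy : (y : ℝ) ≤ (n : ℝ) := by exact_mod_cast h.2
      have hn' : (0 : ℝ) ≤ (n : ℝ) := by exact_mod_cast hn
      apply div_nonneg <;> linarith
  · exact le_refl 0

lemma hfun_of (n y : ℤ) (h1 : 1 ≤ y) (h2 : y ≤ n) :
    hfun n y = 2 * ((n : ℝ) + 1 - (y : ℝ)) / ((n : ℝ) + 1) := if_pos ⟨h1, h2⟩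

lemma hfun_not (n y : ℤ) (h : y < 1 ∨ n < y) : hfun n y = 0 := if_neg (by omega)

lemma supersol (n : ℤ) (hn : 2 ≤ n) (y : ℤ) (h1 : 1 ≤ y) (h2 : y ≤ n) :
    (if y = 1 then (1 : ℝ) else 0) + (hfun n (y - 1) + hfun n (y + 1)) / 2 ≤ hfun n y := by
  have hnR : (2 : ℝ) ≤ (n : ℝ) := by exact_mod_cast hn
  have hne : (n : ℝ) + 1 ≠ 0 := by linarith
  by_cases hy1 : y = 1
  · subst hy1
    rw [if_pos rfl, hfun_not n (1 - 1) (by omega), hfun_of n (1 + 1) (by omega) (by omega),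
      hfun_of n 1 (by omega) (by omega)]
    apply le_of_eq
    push_cast
    field_simp
    ring
  · rw [if_neg hy1]
    by_cases hyn : y = n
    · rw [hfun_of n (y - 1) (by omega) (by omega), hfun_not n (y + 1) (by omega),
        hfun_of n y h1 h2]
      apply le_of_eq
      push_cast
      field_simp
      rw [hyn]
      push_cast
      ring
    · rw [hfun_of n (y - 1) (by omega) (by omega), hfun_of n (y + 1) (by omega) (by omega),
        hfun_of n y h1 h2]
      apply le_of_eq
      push_cast
      field_simp
      ring

lemma sum_le (n : ℤ) (hn : 2 ≤ n) :
    ∀ T : ℕ, ∀ y : ℤ, 0 ≤ y → y ≤ n + 1 →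
      ∑ t ∈ Finset.range T, p n t y ≤ hfun n y := by
  intro T
  induction T with
  | zero => intro y hy0 hy1; simpa using hfun_nonneg n y (by omega)
  | succ T ih =>
      intro y hy0 hy1
      by_cases hmid : 1 ≤ y ∧ y ≤ n
      · obtain ⟨h1, h2⟩ := hmid
        rw [Finset.sum_range_succ']
        have e1 : ∑ i ∈ Finset.range T, p n (i + 1) y
            = (∑ i ∈ Finset.range T, p n i (y - 1)
               + ∑ i ∈ Finset.range T, p n i (y + 1)) / 2 := by
          rw [← Finset.sum_add_distrib, Finset.sum_div]
          exact Finset.sum_congr rfl fun i _ => by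
            rw [p_succ n i y h1 h2, add_div]
        have e2 : p n 0 y = if y = 1 then (1 : ℝ) else 0 := by
          split
          · next h => subst h; rw [p, cnt_zero_one n (by omega)]; simp
          · next h => rw [p, cnt_zero_ne n y h]; simp
        rw [e1, e2]
        have b1 := ih (y - 1) (by omega) (by omega)
        have b2 := ih (y + 1) (by omega) (by omega)
        have hs := supersol n hn y h1 h2
        have hsum : (∑ i ∈ Finset.range T, p n i (y - 1)
            + ∑ i ∈ Finset.range T, p n i (y + 1)) / 2
            ≤ (hfun n (y - 1) + hfun n (y + 1)) / 2 := by linarith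
        linarith
      · have hz : ∀ t, p n t y = 0 := fun t => p_eq_zero n t y (by omega)
        calc ∑ t ∈ Finset.range (T + 1), p n t y = 0 := by simp [hz]
          _ ≤ hfun n y := hfun_nonneg n y (by omega)

end WalkAux

/-- For `n ≥ 20`,
`Σ_{t ≥ 0} Pr_1^t[w(t)=n, MAX(w)=n, MIN(w) ≥ 1] ≤ e^26 / n`. -/
theorem tsum_walkProb_le (n : ℕ) (hn : 20 ≤ n) :
    ∑' t : ℕ, walkProb 1 t
        (fun w => endsAt (n : ℤ) w ∧ maxEq (n : ℤ) w ∧ minGE 1 w) ≤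
      Real.exp 26 / (n : ℝ) := by
  have hn2 : (2 : ℤ) ≤ (n : ℤ) := by exact_mod_cast Nat.le_trans (by norm_num) hn
  have hev : ∀ t : ℕ, walkProb 1 t
      (fun w => endsAt (n : ℤ) w ∧ maxEq (n : ℤ) w ∧ minGE 1 w)
      = WalkAux.p (n : ℤ) t (n : ℤ) := by
    intro t
    show (walkCount 1 t _ : ℝ) / 2 ^ t = (walkCount 1 t _ : ℝ) / 2 ^ t
    congr 2
    unfold walkCount
    congr 1
    ext w
    simp only [Set.mem_setOf_eq]
    constructor
    · rintro ⟨hw, he, hmax, hmin⟩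
      exact ⟨hw, he, fun j => ⟨hmin j, hmax.1 j⟩⟩
    · rintro ⟨hw, he, hc⟩
      exact ⟨hw, he, ⟨fun j => (hc j).2, ⟨Fin.last t, he⟩⟩, fun j => (hc j).1⟩
  rw [tsum_congr hev]
  have hbound := Real.tsum_le_of_sum_range_le (fun t => WalkAux.p_nonneg (n : ℤ) t (n : ℤ))
    (fun T => WalkAux.sum_le (n : ℤ) hn2 T (n : ℤ) (by omega) (by omega))
  apply le_trans hbound
  rw [WalkAux.hfun, if_pos (by omega)]
  have hnR : (20 : ℝ) ≤ (n : ℝ) := by exact_mod_cast hn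
  have h0 : (0 : ℝ) < (n : ℝ) := by linarith
  have hexp : (2 : ℝ) ≤ Real.exp 26 := by
    have := Real.add_one_le_exp (26 : ℝ)
    linarith
  push_cast
  calc 2 * ((n : ℝ) + 1 - (n : ℝ)) / ((n : ℝ) + 1) = 2 / ((n : ℝ) + 1) := by ring_nf
    _ ≤ 2 / (n : ℝ) := by gcongr <;> linarith
    _ ≤ Real.exp 26 / (n : ℝ) := by gcongr
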